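/- An elementary substructure of a standard model for (Σ, Φ) is itself a standard model for (Σ, Φ). -/

import Mathlib

/-! ### First-order logic with inductively defined predicates (FOL_ID) -/

/-- A first-order signature with ordinary and inductive predicate symbols. -/
structure Signature : Type 1 where
  Func : Type
  arF : Func → ℕ
  Pred : Type
  arP : Pred → ℕ
  IndPred : Type
  arI : IndPred → ℕ

/-- Terms over a signature. -/
inductive Tm (S : Signature) : Type
  | var : ℕ → Tm S
  | func (f : S.Func) : (Fin (S.arF f) → Tm S) → Tm S

/-- Formulas of FOL_ID. -/
inductive Fm (S : Signature) : Type
  | fals : Fm S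
  | eq : Tm S → Tm S → Fm S
  | pred (Q : S.Pred) : (Fin (S.arP Q) → Tm S) → Fm S
  | ind (P : S.IndPred) : (Fin (S.arI P) → Tm S) → Fm S
  | not : Fm S → Fm S
  | and : Fm S → Fm S → Fm S
  | or : Fm S → Fm S → Fm S
  | imp : Fm S → Fm S → Fm S
  | all : ℕ → Fm S → Fm S
  | ex : ℕ → Fm S → Fm S

/-- A first-order structure for a signature. -/
structure Struc (S : Signature) : Type 1 where
  U : Type
  interpF (f : S.Func) : (Fin (S.arF f) → U) → U
  interpP (Q : S.Pred) : Set (Fin (S.arP Q) → U)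
  interpI : Set ((P : S.IndPred) × (Fin (S.arI P) → U))

/-- Evaluation of terms. -/
def Tm.eval {S : Signature} (M : Struc S) (ρ : ℕ → M.U) : Tm S → M.U
  | .var n => ρ n
  | .func f ts => M.interpF f (fun i => (ts i).eval M ρ)

/-- Update of a variable assignment. -/
def update {α : Type} (ρ : ℕ → α) (n : ℕ) (a : α) : ℕ → α :=
  fun m => if m = n then a else ρ m

/-- Tarskian satisfaction. -/
def Sat {S : Signature} (M : Struc S) (ρ : ℕ → M.U) : Fm S → Prop
  | .fals => False
  | .eq t u => t.eval M ρ = u.eval M ρ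
  | .pred Q ts => (fun i => (ts i).eval M ρ) ∈ M.interpP Q
  | .ind P ts => ⟨P, fun i => (ts i).eval M ρ⟩ ∈ M.interpI
  | .not A => ¬ Sat M ρ A
  | .and A B => Sat M ρ A ∧ Sat M ρ B
  | .or A B => Sat M ρ A ∨ Sat M ρ B
  | .imp A B => Sat M ρ A → Sat M ρ B
  | .all n A => ∀ a : M.U, Sat M (update ρ n a) A
  | .ex n A => ∃ a : M.U, Sat M (update ρ n a) A

/-- Free variables of a term. -/
def Tm.fv {S : Signature} : Tm S → Finset ℕ
  | .var n => {n}
  | .func _ ts => Finset.univ.biUnion (fun i => (ts i).fv)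

/-- Free variables of a formula. -/
def Fm.fv {S : Signature} : Fm S → Finset ℕ
  | .fals => ∅
  | .eq t u => t.fv ∪ u.fv
  | .pred _ ts => Finset.univ.biUnion (fun i => (ts i).fv)
  | .ind _ ts => Finset.univ.biUnion (fun i => (ts i).fv)
  | .not A => A.fv
  | .and A B => A.fv ∪ B.fv
  | .or A B => A.fv ∪ B.fv
  | .imp A B => A.fv ∪ B.fv
  | .all n A => A.fv.erase n
  | .ex n A => A.fv.erase n

/-- Simultaneous substitution on terms. -/
def Tm.subst {S : Signature} (σ : ℕ → Tm S) : Tm S → Tm S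
  | .var n => σ n
  | .func f ts => .func f (fun i => (ts i).subst σ)

/-- Substitution of a (closed) term for a variable in a formula. -/
def Fm.substC {S : Signature} (x : ℕ) (t : Tm S) : Fm S → Fm S
  | .fals => .fals
  | .eq a b => .eq (a.subst (fun n => if n = x then t else .var n))
      (b.subst (fun n => if n = x then t else .var n))
  | .pred Q ts => .pred Q (fun i => (ts i).subst (fun n => if n = x then t else .var n))
  | .ind P ts => .ind P (fun i => (ts i).subst (fun n => if n = x then t else .var n))
  | .not A => .not (A.substC x t)
  | .and A B => .and (A.substC x t) (B.substC x t)
  | .or A B => .or (A.substC x t) (B.substC x t)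
  | .imp A B => .imp (A.substC x t) (B.substC x t)
  | .all n A => if n = x then .all n A else .all n (A.substC x t)
  | .ex n A => if n = x then .ex n A else .ex n (A.substC x t)

/-- A production rule for inductive predicates. -/
structure ProdRule (S : Signature) : Type where
  concl : S.IndPred
  conclArgs : Fin (S.arI concl) → Tm S
  ordPrems : List ((Q : S.Pred) × (Fin (S.arP Q) → Tm S))
  indPrems : List ((P : S.IndPred) × (Fin (S.arI P) → Tm S))

/-- The monotone operator determined by a set of production rules over a structure. -/
def step {S : Signature} (M : Struc S) (Φ : List (ProdRule S))
    (X : Set ((P : S.IndPred) × (Fin (S.arI P) → M.U))) :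
    Set ((P : S.IndPred) × (Fin (S.arI P) → M.U)) :=
  { v | ∃ r ∈ Φ, ∃ ρ : ℕ → M.U,
      (∀ q ∈ r.ordPrems, (fun i => (q.2 i).eval M ρ) ∈ M.interpP q.1) ∧
      (∀ p ∈ r.indPrems, ⟨p.1, fun i => (p.2 i).eval M ρ⟩ ∈ X) ∧
      v = ⟨r.concl, fun i => (r.conclArgs i).eval M ρ⟩ }

theorem step_mono {S : Signature} (M : Struc S) (Φ : List (ProdRule S)) :
    Monotone (step M Φ) := by
  rintro X Y h v ⟨r, hr, ρ, hq, hp, hv⟩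
  exact ⟨r, hr, ρ, hq, fun p hp' => h (hp p hp'), hv⟩

/-- The operator for the production rules, as an order homomorphism. -/
def stepHom {S : Signature} (M : Struc S) (Φ : List (ProdRule S)) :
    Set ((P : S.IndPred) × (Fin (S.arI P) → M.U)) →o
      Set ((P : S.IndPred) × (Fin (S.arI P) → M.U)) :=
  ⟨step M Φ, step_mono M Φ⟩

/-- A structure is a standard model for `(S, Φ)` if it interprets the inductive
predicates by the least fixpoint of the operator for `Φ`. -/
def Standard {S : Signature} (M : Struc S) (Φ : List (ProdRule S)) : Prop :=
  M.interpI = OrderHom.lfp (stepHom M Φ)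

/-- The variables occurring in a production rule. -/
def ProdRule.vars {S : Signature} (r : ProdRule S) : Finset ℕ :=
  (Finset.univ.biUnion fun i => (r.conclArgs i).fv) ∪
    (r.ordPrems.foldr (fun q s => s ∪ Finset.univ.biUnion fun i => (q.2 i).fv) ∅) ∪
    (r.indPrems.foldr (fun p s => s ∪ Finset.univ.biUnion fun i => (p.2 i).fv) ∅)

def bigAnd {S : Signature} : List (Fm S) → Fm S
  | [] => .not .fals
  | A :: l => .and A (bigAnd l)

def bigOr {S : Signature} : List (Fm S) → Fm S
  | [] => .fals
  | A :: l => .or A (bigOr l)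

def exList {S : Signature} : List ℕ → Fm S → Fm S
  | [], A => A
  | n :: l, A => .ex n (exList l A)

/-- The `k`-fold syntactic unfolding `P^{(k)}(t⃗)` of an inductive predicate:
`P^{(0)}(t⃗) ≡ ⊥` and `P^{(k+1)}(t⃗)` is the disjunction, over production rules with
conclusion `P t⃗₀`, of `∃y⃗ (t⃗ = t⃗₀ ∧ ⋀ Q_l u⃗_l ∧ ⋀ P_{j_p}^{(k)}(t⃗_p))`, with the
rule variables `y⃗` renamed to be fresh for `t⃗`. -/
def unfold {S : Signature} [DecidableEq S.IndPred] (Φ : List (ProdRule S)) :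
    ℕ → (P : S.IndPred) → (Fin (S.arI P) → Tm S) → Fm S
  | 0, _, _ => .fals
  | (k+1), P, ts =>
    bigOr (Φ.map fun r =>
      if h : r.concl = P then
        let N : ℕ := ((Finset.univ.biUnion fun i => (ts i).fv).sup id) + 1
        let σ : ℕ → Tm S := fun n => .var (n + N)
        exList ((r.vars.sort (· ≤ ·)).map (· + N))
          (.and (bigAnd ((List.finRange (S.arI P)).map fun i =>
              .eq (ts i) (((h ▸ r.conclArgs) i).subst σ)))
            (.and (bigAnd (r.ordPrems.map fun q => .pred q.1 fun i => (q.2 i).subst σ))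
              (bigAnd (r.indPrems.map fun p => unfold Φ k p.1 fun i => (p.2 i).subst σ))))
      else .fals)

/-! Each unfolding `P^{(k)}(x⃗)` is a first-order formula that holds exactly of the tuples in
the `k`-th iterate of the rule operator, and since every rule has finitely many premises the
least fixed point of that operator is the union of its finite iterates (Kleene). An elementary
map preserves and reflects the atoms `P(x⃗)` and all the formulas `P^{(k)}(x⃗)`; hence `P(a⃗)`
holds in `M'` iff `P(h a⃗)` holds in `M` iff some `P^{(k)}(h a⃗)` holds in `M` iff some
`P^{(k)}(a⃗)` holds in `M'`. -/
section Kleene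

open OmegaCompletePartialOrder

variable {S : Signature} (M : Struc S) (Φ : List (ProdRule S))

theorem step_iUnion_subset {c : ℕ → Set ((P : S.IndPred) × (Fin (S.arI P) → M.U))}
    (hc : Monotone c) : step M Φ (⋃ n, c n) ⊆ ⋃ n, step M Φ (c n) := by
  rintro v ⟨r, hr, ρ, hord, hind, rfl⟩
  have : ∀ᶠ n in Filter.atTop, ∀ p ∈ r.indPrems,
      (⟨p.1, fun i => (p.2 i).eval M ρ⟩ : (P : S.IndPred) × (Fin (S.arI P) → M.U)) ∈ c n := by
    refine (Filter.eventually_all_finite r.indPrems.finite_toSet).2 fun p hp => ?_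
    obtain ⟨n, hn⟩ := Set.mem_iUnion.1 (hind p hp)
    exact Filter.eventually_atTop.2 ⟨n, fun m hm => hc hm hn⟩
  obtain ⟨n, hn⟩ := this.exists
  exact Set.mem_iUnion.2 ⟨n, r, hr, ρ, hord, hn, rfl⟩

theorem ωScottContinuous_stepHom : ωScottContinuous (stepHom M Φ) := by
  refine ωScottContinuous.of_map_ωSup_of_orderHom fun c => ?_
  rw [← ωSup_eq_of_isLUB (isLUB_iSup (f := c)), ← ωSup_eq_of_isLUB (isLUB_iSup (f := c.map _))]
  exact (step_iUnion_subset M Φ c.monotone).antisymm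
    (Set.iUnion_subset fun n => step_mono M Φ (Set.subset_iUnion c n))

theorem lfp_stepHom_eq_iUnion : OrderHom.lfp (stepHom M Φ) = ⋃ k, (step M Φ)^[k] ∅ :=
  fixedPoints.lfp_eq_sSup_iterate _ (ωScottContinuous_stepHom M Φ)

end Kleene

section Semantics

variable {S : Signature} (M : Struc S)

theorem Tm.eval_congr {ρ ρ' : ℕ → M.U} :
    ∀ t : Tm S, (∀ n ∈ t.fv, ρ n = ρ' n) → t.eval M ρ = t.eval M ρ'
  | .var n, h => h n (Finset.mem_singleton_self n)
  | .func f ts, h => congrArg (M.interpF f) <| funext fun i =>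
      (ts i).eval_congr fun n hn => h n (Finset.mem_biUnion.2 ⟨i, Finset.mem_univ i, hn⟩)

theorem Tm.eval_subst (σ : ℕ → Tm S) (ρ : ℕ → M.U) :
    ∀ t : Tm S, (t.subst σ).eval M ρ = t.eval M fun n => (σ n).eval M ρ
  | .var _ => rfl
  | .func f ts => congrArg (M.interpF f) <| funext fun i => (ts i).eval_subst σ ρ

theorem sat_bigAnd (ρ : ℕ → M.U) : ∀ l : List (Fm S), Sat M ρ (bigAnd l) ↔ ∀ A ∈ l, Sat M ρ A
  | [] => by simp [bigAnd, Sat]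
  | A :: l => by simp [bigAnd, Sat, sat_bigAnd ρ l]

theorem sat_bigOr (ρ : ℕ → M.U) : ∀ l : List (Fm S), Sat M ρ (bigOr l) ↔ ∃ A ∈ l, Sat M ρ A
  | [] => by simp [bigOr, Sat]
  | A :: l => by simp [bigOr, Sat, sat_bigOr ρ l]

theorem sat_exList (A : Fm S) : ∀ (l : List ℕ) (ρ : ℕ → M.U),
    Sat M ρ (exList l A) ↔ ∃ ρ' : ℕ → M.U, (∀ n ∉ l, ρ' n = ρ n) ∧ Sat M ρ' A
  | [], ρ => by
    refine ⟨fun h => ⟨ρ, fun _ _ => rfl, h⟩, ?_⟩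
    rintro ⟨ρ', hρ', hA⟩
    rwa [← funext fun n => hρ' n List.not_mem_nil]
  | m :: l, ρ => by
    simp only [exList, Sat, sat_exList A l]
    constructor
    · rintro ⟨a, ρ', hρ', hA⟩
      refine ⟨ρ', fun n hn => ?_, hA⟩
      rw [List.mem_cons, not_or] at hn
      rw [hρ' n hn.2, update, if_neg hn.1]
    · rintro ⟨ρ', hρ', hA⟩
      refine ⟨ρ' m, ρ', fun n hn => ?_, hA⟩
      by_cases hnm : n = m
      · simp [update, hnm]
      · rw [update, if_neg hnm, hρ' n (by simp [hnm, hn])]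

end Semantics

/-- `ρ` with the variables `v + N`, `v ∈ V`, reassigned to `τ v`: the effect of the
existential quantifiers over the renamed rule variables in `unfold`. -/
def shiftUpdate {α : Type} (ρ : ℕ → α) (N : ℕ) (V : Finset ℕ) (τ : ℕ → α) : ℕ → α :=
  fun m => if N ≤ m ∧ m - N ∈ V then τ (m - N) else ρ m

section ShiftUpdate

variable {S : Signature} (M : Struc S) (ρ τ : ℕ → M.U) (N : ℕ) (V : Finset ℕ)

theorem mem_map_add_sort_iff {m : ℕ} :
    m ∈ (V.sort (· ≤ ·)).map (· + N) ↔ N ≤ m ∧ m - N ∈ V := by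
  simp only [List.mem_map, Finset.mem_sort]
  constructor
  · rintro ⟨v, hv, rfl⟩
    simpa using hv
  · rintro ⟨hm, hv⟩
    exact ⟨m - N, hv, Nat.sub_add_cancel hm⟩

theorem sat_exList_map_add_sort (A : Fm S) :
    Sat M ρ (exList ((V.sort (· ≤ ·)).map (· + N)) A) ↔
      ∃ τ : ℕ → M.U, Sat M (shiftUpdate ρ N V τ) A := by
  rw [sat_exList]
  constructor
  · rintro ⟨ρ', hρ', hA⟩
    refine ⟨fun n => ρ' (n + N), ?_⟩
    convert hA using 1
    funext m
    unfold shiftUpdate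
    split_ifs with hm
    · exact congrArg ρ' (Nat.sub_add_cancel hm.1)
    · exact (hρ' m ((mem_map_add_sort_iff N V).not.2 hm)).symm
  · rintro ⟨τ, hA⟩
    exact ⟨_, fun m hm => if_neg ((mem_map_add_sort_iff N V).not.1 hm), hA⟩

theorem Tm.eval_shiftUpdate_of_fv_lt {t : Tm S} (ht : ∀ n ∈ t.fv, n < N) :
    t.eval M (shiftUpdate ρ N V τ) = t.eval M ρ :=
  t.eval_congr M fun n hn => if_neg fun h => absurd (ht n hn) (not_lt.2 h.1)

theorem Tm.eval_subst_shift_shiftUpdate {t : Tm S} (ht : t.fv ⊆ V) :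
    (t.subst fun n => .var (n + N)).eval M (shiftUpdate ρ N V τ) = t.eval M τ := by
  rw [Tm.eval_subst]
  exact t.eval_congr M fun n hn => by simp [Tm.eval, shiftUpdate, ht hn]

end ShiftUpdate

section RuleVars

variable {S : Signature}

theorem fv_subset_foldr_union {ι : Type} {ar : ι → ℕ} {l : List ((Q : ι) × (Fin (ar Q) → Tm S))}
    {q : (Q : ι) × (Fin (ar Q) → Tm S)} (hq : q ∈ l) (i : Fin (ar q.1)) :
    (q.2 i).fv ⊆ l.foldr (fun q s => s ∪ Finset.univ.biUnion fun i => (q.2 i).fv) ∅ := by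
  induction l with
  | nil => cases hq
  | cons a l ih =>
    rw [List.foldr_cons]
    rcases List.mem_cons.1 hq with rfl | hq
    · exact (Finset.subset_biUnion_of_mem (fun i => (q.2 i).fv) (Finset.mem_univ i)).trans
        Finset.subset_union_right
    · exact (ih hq).trans Finset.subset_union_left

variable (r : ProdRule S)

theorem ProdRule.fv_conclArgs_subset_vars (i : Fin (S.arI r.concl)) :
    (r.conclArgs i).fv ⊆ r.vars :=
  (Finset.subset_biUnion_of_mem (fun i => (r.conclArgs i).fv) (Finset.mem_univ i)).trans
    (Finset.subset_union_left.trans Finset.subset_union_left)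

theorem ProdRule.fv_ordPrems_subset_vars {q : (Q : S.Pred) × (Fin (S.arP Q) → Tm S)}
    (hq : q ∈ r.ordPrems) (i : Fin (S.arP q.1)) : (q.2 i).fv ⊆ r.vars :=
  (fv_subset_foldr_union hq i).trans (Finset.subset_union_right.trans Finset.subset_union_left)

theorem ProdRule.fv_indPrems_subset_vars {p : (P : S.IndPred) × (Fin (S.arI P) → Tm S)}
    (hp : p ∈ r.indPrems) (i : Fin (S.arI p.1)) : (p.2 i).fv ⊆ r.vars :=
  (fv_subset_foldr_union hp i).trans Finset.subset_union_right

end RuleVars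

section Unfolding

variable {S : Signature} [DecidableEq S.IndPred] (Φ : List (ProdRule S))

/-- The disjunct of `P^{(k+1)}(t⃗)` contributed by a rule `r` with conclusion `P`. -/
def ruleUnfold (k : ℕ) (r : ProdRule S) (ts : Fin (S.arI r.concl) → Tm S) : Fm S :=
  let N : ℕ := ((Finset.univ.biUnion fun i => (ts i).fv).sup id) + 1
  let σ : ℕ → Tm S := fun n => .var (n + N)
  exList ((r.vars.sort (· ≤ ·)).map (· + N))
    (.and (bigAnd ((List.finRange (S.arI r.concl)).map fun i =>
        .eq (ts i) ((r.conclArgs i).subst σ)))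
      (.and (bigAnd (r.ordPrems.map fun q => .pred q.1 fun i => (q.2 i).subst σ))
        (bigAnd (r.indPrems.map fun p => unfold Φ k p.1 fun i => (p.2 i).subst σ))))

variable (M : Struc S)

theorem sat_ruleUnfold_iff {k : ℕ} {X : Set ((P : S.IndPred) × (Fin (S.arI P) → M.U))}
    (hX : ∀ (P : S.IndPred) (us : Fin (S.arI P) → Tm S) (ρ : ℕ → M.U),
      Sat M ρ (unfold Φ k P us) ↔ ⟨P, fun i => (us i).eval M ρ⟩ ∈ X)
    (r : ProdRule S) (ts : Fin (S.arI r.concl) → Tm S) (ρ : ℕ → M.U) :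
    Sat M ρ (ruleUnfold Φ k r ts) ↔ ∃ τ : ℕ → M.U,
      (∀ q ∈ r.ordPrems, (fun i => (q.2 i).eval M τ) ∈ M.interpP q.1) ∧
      (∀ p ∈ r.indPrems, ⟨p.1, fun i => (p.2 i).eval M τ⟩ ∈ X) ∧
      (fun i => (ts i).eval M ρ) = fun i => (r.conclArgs i).eval M τ := by
  rw [ruleUnfold, sat_exList_map_add_sort]
  refine exists_congr fun τ => ?_
  simp only [Sat, sat_bigAnd, List.forall_mem_map, List.mem_finRange, forall_const]
  set N := ((Finset.univ.biUnion fun i => (ts i).fv).sup id) + 1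
  have hts (i : Fin (S.arI r.concl)) : (ts i).eval M (shiftUpdate ρ N r.vars τ) = (ts i).eval M ρ :=
    Tm.eval_shiftUpdate_of_fv_lt M ρ τ N r.vars fun n hn => Nat.lt_succ_of_le <|
      Finset.le_sup (f := id) (Finset.mem_biUnion.2 ⟨i, Finset.mem_univ i, hn⟩)
  have hsub {t : Tm S} (ht : t.fv ⊆ r.vars) :=
    Tm.eval_subst_shift_shiftUpdate M ρ τ N r.vars ht
  rw [and_rotate]
  refine and_congr ?_ (and_congr ?_ ?_)
  · exact forall₂_congr fun q hq => by simp only [hsub (r.fv_ordPrems_subset_vars hq _)]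
  · exact forall₂_congr fun p hp => by rw [hX]; simp only [hsub (r.fv_indPrems_subset_vars hp _)]
  · rw [funext_iff]
    exact forall_congr' fun i => by rw [hts, hsub (r.fv_conclArgs_subset_vars i)]

theorem sat_unfold_iff_mem_iterate_step : ∀ (k : ℕ) (P : S.IndPred) (ts : Fin (S.arI P) → Tm S)
    (ρ : ℕ → M.U), Sat M ρ (unfold Φ k P ts) ↔ ⟨P, fun i => (ts i).eval M ρ⟩ ∈ (step M Φ)^[k] ∅
  | 0, _, _, _ => by simp [unfold, Sat]
  | k + 1, P, ts, ρ => by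
    rw [Function.iterate_succ_apply', unfold, sat_bigOr]
    simp only [List.mem_map, exists_exists_and_eq_and]
    refine exists_congr fun r => and_congr_right fun _ => ?_
    by_cases hr : r.concl = P
    · subst hr
      rw [dif_pos rfl]
      refine (sat_ruleUnfold_iff Φ M (sat_unfold_iff_mem_iterate_step k) r ts ρ).trans ?_
      simp [Sigma.ext_iff]
    · rw [dif_neg hr]
      simp only [Sat, false_iff, not_exists, not_and]
      exact fun _ _ _ hv => hr (congrArg Sigma.fst hv).symm

end Unfolding

def IsElementaryMap {S : Signature} (M M' : Struc S) (h : M'.U → M.U) : Prop :=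
  ∀ (A : Fm S) (ρ : ℕ → M'.U), Sat M' ρ A ↔ Sat M (h ∘ ρ) A

theorem exists_assignment_extending {α : Type} [Nonempty α] {n : ℕ} (a : Fin n → α) :
    ∃ ρ : ℕ → α, (fun i : Fin n => ρ i) = a :=
  ⟨fun m => if hm : m < n then a ⟨m, hm⟩ else Classical.arbitrary α, by simp⟩

namespace IsElementaryMap

variable {S : Signature} {M M' : Struc S} [Nonempty M'.U] {h : M'.U → M.U}

theorem mem_interpI_iff (hh : IsElementaryMap M M' h) (P : S.IndPred) (a : Fin (S.arI P) → M'.U) :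
    ⟨P, a⟩ ∈ M'.interpI ↔ ⟨P, h ∘ a⟩ ∈ M.interpI := by
  obtain ⟨ρ, rfl⟩ := exists_assignment_extending a
  exact hh (.ind P fun i => .var i) ρ

theorem mem_iterate_step_iff [DecidableEq S.IndPred] (hh : IsElementaryMap M M' h)
    (Φ : List (ProdRule S)) (k : ℕ) (P : S.IndPred) (a : Fin (S.arI P) → M'.U) :
    ⟨P, a⟩ ∈ (step M' Φ)^[k] ∅ ↔ ⟨P, h ∘ a⟩ ∈ (step M Φ)^[k] ∅ := by
  obtain ⟨ρ, rfl⟩ := exists_assignment_extending a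
  exact (sat_unfold_iff_mem_iterate_step Φ M' k P (fun i => .var i) ρ).symm.trans <|
    (hh _ ρ).trans (sat_unfold_iff_mem_iterate_step Φ M k P (fun i => .var i) (h ∘ ρ))

end IsElementaryMap

/-- an elementary substructure of a standard model for `(Σ, Φ)` is
itself a standard model for `(Σ, Φ)`.  Here `h : M'.U → M.U` realizes `M'` as an
elementary substructure of `M`: satisfaction of every formula is preserved and
reflected along `h`. -/
theorem stmt11 {S : Signature} (Φ : List (ProdRule S)) (M M' : Struc S)
    [Nonempty M'.U] (h : M'.U → M.U)
    (helem : ∀ (A : Fm S) (ρ : ℕ → M'.U), Sat M' ρ A ↔ Sat M (h ∘ ρ) A)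
    (hstd : Standard M Φ) : Standard M' Φ := by
  classical
  unfold Standard at hstd ⊢
  ext ⟨P, a⟩
  simp only [lfp_stepHom_eq_iUnion, Set.mem_iUnion, IsElementaryMap.mem_interpI_iff helem, hstd,
    IsElementaryMap.mem_iterate_step_iff helem]
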